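/- Let a₀, a₁ ∈ ℝ³ be unit vectors with a₀ × a₁ ≠ 0, and let s ∈ ℝ³ satisfy a₀·s = A₀ and a₁·s = A₁. Set t = s·(a₀ × a₁). Then ‖s‖ ≤ 1 if and only if t² ≤ (1 − A₀²)(1 − A₁²) − (a₀·a₁ − A₀·A₁)². -/

import Mathlib

noncomputable section
open scoped ComplexOrder

/-- Euclidean 3-space, the home of Bloch vectors and measurement directions. -/
abbrev E3 := EuclideanSpace ℝ (Fin 3)

/-- The standard inner product on ℝ³. -/
def dot (a b : E3) : ℝ := inner ℝ a b

/-- The cross product on ℝ³. -/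
def cross3 (a b : E3) : E3 :=
  (WithLp.equiv 2 (Fin 3 → ℝ)).symm
    ![a 1 * b 2 - a 2 * b 1, a 2 * b 0 - a 0 * b 2, a 0 * b 1 - a 1 * b 0]

/-!
Let `c = a₀·a₁`. Expanding the Gram determinant of `a₀, a₁, s` gives, for unit vectors,
`(1 - A₀²)(1 - A₁²) - (c - A₀A₁)² - t² = (1 - c²)(1 - ‖s‖²)`. By Lagrange's identity
`1 - c² = ‖a₀ × a₁‖² > 0`, so the difference is nonnegative exactly when `‖s‖ ≤ 1`.
-/

lemma dot_eq_sum (a b : E3) : dot a b = a 0 * b 0 + a 1 * b 1 + a 2 * b 2 := by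
  simp [dot, PiLp.inner_apply, Fin.sum_univ_three, mul_comm]

lemma dot_self_eq_norm_sq (a : E3) : dot a a = ‖a‖ ^ 2 := real_inner_self_eq_norm_sq a

lemma cross3_apply (a b : E3) (i : Fin 3) :
    cross3 a b i = ![a 1 * b 2 - a 2 * b 1, a 2 * b 0 - a 0 * b 2, a 0 * b 1 - a 1 * b 0] i :=
  rfl

lemma norm_cross3_sq (a b : E3) : ‖cross3 a b‖ ^ 2 = ‖a‖ ^ 2 * ‖b‖ ^ 2 - dot a b ^ 2 := by
  simp only [← dot_self_eq_norm_sq, dot_eq_sum, cross3_apply]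
  simp only [Fin.isValue, Matrix.cons_val_zero, Matrix.cons_val_one, Matrix.cons_val_two,
    Matrix.head_cons, Matrix.tail_cons]
  ring

/-- The squared triple product is the Gram determinant of `a, b, s`, expanded along `s`. -/
lemma dot_cross3_sq (a b s : E3) :
    dot s (cross3 a b) ^ 2 = ‖cross3 a b‖ ^ 2 * ‖s‖ ^ 2
      - (‖b‖ ^ 2 * dot a s ^ 2 - 2 * dot a b * dot a s * dot b s + ‖a‖ ^ 2 * dot b s ^ 2) := by
  simp only [← dot_self_eq_norm_sq, dot_eq_sum, cross3_apply]
  simp only [Fin.isValue, Matrix.cons_val_zero, Matrix.cons_val_one, Matrix.cons_val_two,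
    Matrix.head_cons, Matrix.tail_cons]
  ring

lemma uncertainty_sub_dot_cross3_sq {a b : E3} (ha : ‖a‖ = 1) (hb : ‖b‖ = 1) (s : E3) :
    (1 - dot a s ^ 2) * (1 - dot b s ^ 2) - (dot a b - dot a s * dot b s) ^ 2
        - dot s (cross3 a b) ^ 2 = ‖cross3 a b‖ ^ 2 * (1 - ‖s‖ ^ 2) := by
  rw [dot_cross3_sq, norm_cross3_sq, ha, hb]
  ring

/-- The residual parameter t = s·(a₀×a₁) is bounded exactly by the uncertainty
expression: ‖s‖ ≤ 1 iff t² ≤ (1−A₀²)(1−A₁²) − (a₀·a₁ − A₀A₁)². -/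
theorem residual_parameter_bound (a₀ a₁ s : E3)
    (ha₀ : ‖a₀‖ = 1) (ha₁ : ‖a₁‖ = 1) (hne : cross3 a₀ a₁ ≠ 0)
    (A₀ A₁ : ℝ) (hA₀ : dot a₀ s = A₀) (hA₁ : dot a₁ s = A₁) :
    ‖s‖ ≤ 1 ↔
      dot s (cross3 a₀ a₁) ^ 2
        ≤ (1 - A₀ ^ 2) * (1 - A₁ ^ 2) - (dot a₀ a₁ - A₀ * A₁) ^ 2 := by
  subst hA₀ hA₁
  have hcross : 0 < ‖cross3 a₀ a₁‖ ^ 2 := by positivity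
  rw [iff_comm, ← sub_nonneg, uncertainty_sub_dot_cross3_sq ha₀ ha₁,
    mul_nonneg_iff_of_pos_left hcross, sub_nonneg, sq_le_one_iff₀ (norm_nonneg s)]
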